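/- Assume (H): N ≥ 1, μ1, μ2, β > 0, r1, r2 > 1, r1 + r2 < 2 + 4/N. Let a1* = μ1^{-N/2}‖Q‖_2^2 and a2* = μ2^{-N/2}‖Q‖_2^2. Then m(a1*, a2*) = -∞: taking u_i,t(x) = t^{N/2} Q_i(tx) with Q_i = μ_i^{-N/4} Q, one has J(u_{1,t}, u_{2,t}) = -β μ1^{-Nr1/4} μ2^{-Nr2/4} t^{(N/2)(r1+r2-2)} ∫ Q^{r1+r2} dx → -∞ as t → ∞. -/

import Mathlib

open MeasureTheory Filter
open Set Topology

noncomputable section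

/-- Euclidean space `ℝ^N`. -/
abbrev Rn (N : ℕ) := EuclideanSpace ℝ (Fin N)

/-- The Sobolev space `H^1(ℝ^N; ℂ)`: `u` and its (Fréchet) derivative are in `L^2`. -/
def H1 (N : ℕ) : Set (Rn N → ℂ) :=
  {u | MemLp u 2 volume ∧ MemLp (fun x => fderiv ℝ u x) 2 volume}

/-- The energy functional `J` of the NLS system. -/
def Jfun (N : ℕ) (μ1 μ2 β r1 r2 : ℝ) (u : (Rn N → ℂ) × (Rn N → ℂ)) : ℝ :=
  (1 / 2) * (∫ x, (‖fderiv ℝ u.1 x‖ ^ 2 + ‖fderiv ℝ u.2 x‖ ^ 2))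
    - (μ1 * (N : ℝ) / (2 * (N : ℝ) + 4)) * (∫ x, ‖u.1 x‖ ^ ((2 : ℝ) + 4 / (N : ℝ)))
    - (μ2 * (N : ℝ) / (2 * (N : ℝ) + 4)) * (∫ x, ‖u.2 x‖ ^ ((2 : ℝ) + 4 / (N : ℝ)))
    - β * (∫ x, ‖u.1 x‖ ^ r1 * ‖u.2 x‖ ^ r2)

/-- The double mass constraint `S(a₁,a₂)`. -/
def Sconstr (N : ℕ) (a1 a2 : ℝ) : Set ((Rn N → ℂ) × (Rn N → ℂ)) :=
  {u | u.1 ∈ H1 N ∧ u.2 ∈ H1 N ∧ (∫ x, ‖u.1 x‖ ^ 2) = a1 ∧ (∫ x, ‖u.2 x‖ ^ 2) = a2}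

/-- The Laplacian of a real-valued function on `ℝ^N`. -/
def lapR {N : ℕ} (u : Rn N → ℝ) (x : Rn N) : ℝ :=
  ∑ i : Fin N, fderiv ℝ (fun y => fderiv ℝ u y (EuclideanSpace.single i 1)) x
    (EuclideanSpace.single i 1)

/-- The Laplacian of a complex-valued function on `ℝ^N`. -/
def lapC {N : ℕ} (u : Rn N → ℂ) (x : Rn N) : ℂ :=
  ∑ i : Fin N, fderiv ℝ (fun y => fderiv ℝ u y (EuclideanSpace.single i 1)) x
    (EuclideanSpace.single i 1)

/-- `Q` is a positive, radially symmetric solution of the Gagliardo–Nirenberg equation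
for the mass critical exponent `p = 2 + 4/N`, i.e. `-ΔQ + (2/N) Q = Q^{1+4/N}`. -/
def IsGNGroundState (N : ℕ) (Q : Rn N → ℝ) : Prop :=
  (∀ x, 0 < Q x) ∧ (∀ x y : Rn N, ‖x‖ = ‖y‖ → Q x = Q y) ∧
    MemLp Q 2 volume ∧ MemLp (fun x => fderiv ℝ Q x) 2 volume ∧
    (∀ x, -lapR Q x + (2 / (N : ℝ)) * Q x = Q x ^ ((1 : ℝ) + 4 / (N : ℝ)))

/-- The critical mass `a* = μ^{-N/2} ‖Q‖₂²`. -/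
def aStar (N : ℕ) (μ : ℝ) (Q : Rn N → ℝ) : ℝ :=
  μ ^ (-(N : ℝ) / 2) * ∫ x, Q x ^ 2

/-- Squared `H¹` distance between two functions. -/
def H1distSq {N : ℕ} (u v : Rn N → ℂ) : ℝ :=
  (∫ x, ‖u x - v x‖ ^ 2) + ∫ x, ‖fderiv ℝ u x - fderiv ℝ v x‖ ^ 2

/-- `H¹ × H¹` distance between two pairs of functions. -/
def dH1 {N : ℕ} (u v : (Rn N → ℂ) × (Rn N → ℂ)) : ℝ :=
  Real.sqrt (H1distSq u.1 v.1 + H1distSq u.2 v.2)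

/-- Assumption (A1). -/
def A1cond (N : ℕ) (r1 r2 : ℝ) : Prop :=
  r2 < 2 ∧ (3 ≤ N → 2 * r1 / (2 - r2) ≤ 2 * (N : ℝ) / ((N : ℝ) - 2))

/-- Assumption (A2). -/
def A2cond (N : ℕ) (r1 r2 : ℝ) : Prop :=
  r1 < 2 ∧ (3 ≤ N → 2 * r2 / (2 - r1) ≤ 2 * (N : ℝ) / ((N : ℝ) - 2))



-- dense sets give unique differentiability
lemma uniqueDiffWithinAt_of_dense' {E : Type*} [NormedAddCommGroup E] [NormedSpace ℝ E]
    {D : Set E} (hD : Dense D) (x : E) : UniqueDiffWithinAt ℝ D x := by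
  have htc : ∀ y : E, y ∈ tangentConeAt ℝ D x := by
    intro y
    have h : ∀ n : ℕ, ∃ z ∈ D, dist (x + ((n : ℝ) + 1)⁻¹ • y) z
        < ((n : ℝ) + 1)⁻¹ * ((n : ℝ) + 1)⁻¹ := by
      intro n
      have hpos : 0 < ((n : ℝ) + 1)⁻¹ * ((n : ℝ) + 1)⁻¹ := by positivity
      exact Metric.mem_closure_iff.1 (hD _) _ hpos
    choose z hzD hzd using h
    refine mem_tangentConeAt_iff_exists_seq_norm_tendsto_atTop.2 ⟨fun n => (n : ℝ) + 1, fun n => z n - x,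
      ?_, Eventually.of_forall (fun n => by simpa using hzD n), ?_⟩
    · have h1 : Tendsto (fun n : ℕ => (n : ℝ) + 1) atTop atTop :=
        tendsto_atTop_add_const_right _ _ tendsto_natCast_atTop_atTop
      exact h1.congr fun n => (Real.norm_of_nonneg (by positivity)).symm
    · have key : ∀ n : ℕ, dist (((n : ℝ) + 1) • (z n - x)) y ≤ ((n : ℝ) + 1)⁻¹ := by
        intro n
        have hn : (0 : ℝ) < (n : ℝ) + 1 := by positivity
        have hrw : ((n : ℝ) + 1) • (z n - x) - y
            = ((n : ℝ) + 1) • (z n - (x + ((n : ℝ) + 1)⁻¹ • y)) := by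
          rw [smul_sub, smul_sub, smul_add, smul_smul, mul_inv_cancel₀ hn.ne', one_smul]
          abel
        have heq : dist (((n : ℝ) + 1) • (z n - x)) y
            = ((n : ℝ) + 1) * dist (z n) (x + ((n : ℝ) + 1)⁻¹ • y) := by
          rw [dist_eq_norm, hrw, norm_smul, Real.norm_of_nonneg hn.le, dist_eq_norm]
        rw [heq]
        calc ((n : ℝ) + 1) * dist (z n) (x + ((n : ℝ) + 1)⁻¹ • y)
            ≤ ((n : ℝ) + 1) * (((n : ℝ) + 1)⁻¹ * ((n : ℝ) + 1)⁻¹) := by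
              refine mul_le_mul_of_nonneg_left ?_ hn.le
              rw [dist_comm]
              exact (hzd n).le
          _ = ((n : ℝ) + 1)⁻¹ := by field_simp
      have h0 : Tendsto (fun n : ℕ => ((n : ℝ) + 1)⁻¹) atTop (𝓝 0) := by
        simpa [one_div] using tendsto_one_div_add_atTop_nhds_zero_nat (𝕜 := ℝ)
      rw [tendsto_iff_dist_tendsto_zero]
      exact squeeze_zero (fun n => dist_nonneg) key h0
  constructor
  · have h2 : tangentConeAt ℝ D x = Set.univ := Set.eq_univ_of_forall htc
    rw [h2, Submodule.span_univ]
    simpa using dense_univ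
  · exact hD x

lemma fderiv_eq_zero_of_ae_zero {N : ℕ} {g : Rn N → ℝ}
    (hg : ∀ᵐ y ∂(volume : Measure (Rn N)), g y = 0) (x : Rn N) : fderiv ℝ g x = 0 := by
  have hD : Dense {y : Rn N | g y = 0} := by
    rw [dense_iff_inter_open]
    intro U hU hUne
    by_contra hempty
    have hsub : U ⊆ {y : Rn N | ¬ g y = 0} := by
      intro u hu
      intro h0
      exact hempty ⟨u, hu, h0⟩
    have h0 : volume U = 0 := measure_mono_null hsub (ae_iff.1 hg)
    exact (hU.measure_pos volume hUne).ne' h0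
  by_cases hdiff : DifferentiableAt ℝ g x
  · have hx0 : g x = 0 := by
      rcases mem_closure_iff_seq_limit.1 (hD x) with ⟨u, huD, hul⟩
      have h1 : Tendsto (g ∘ u) atTop (𝓝 (g x)) := hdiff.continuousAt.tendsto.comp hul
      have h2 : Tendsto (g ∘ u) atTop (𝓝 0) := by
        have : (g ∘ u) = fun _ => 0 := funext fun n => huD n
        rw [this]; exact tendsto_const_nhds
      exact tendsto_nhds_unique h1 h2
    have hW0 : HasFDerivWithinAt g (0 : Rn N →L[ℝ] ℝ) {y : Rn N | g y = 0} x :=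
      (hasFDerivWithinAt_const (0 : ℝ) x _).congr (fun y hy => hy) hx0
    have hW : HasFDerivWithinAt g (fderiv ℝ g x) {y : Rn N | g y = 0} x :=
      hdiff.hasFDerivAt.hasFDerivWithinAt
    exact (uniqueDiffWithinAt_of_dense' hD x).eq hW hW0
  · exact fderiv_zero_of_not_differentiableAt hdiff


lemma norm_ofRealCLM_comp {E : Type*} [NormedAddCommGroup E] [NormedSpace ℝ E]
    (L : E →L[ℝ] ℝ) : ‖Complex.ofRealCLM.comp L‖ = ‖L‖ := by
  apply le_antisymm
  · refine ContinuousLinearMap.opNorm_le_bound _ (norm_nonneg L) fun v => ?_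
    simpa using L.le_opNorm v
  · refine ContinuousLinearMap.opNorm_le_bound _ (norm_nonneg _) fun v => ?_
    have h1 : ‖L v‖ = ‖(Complex.ofRealCLM.comp L) v‖ := by simp
    rw [h1]
    exact (Complex.ofRealCLM.comp L).le_opNorm v

lemma norm_fderiv_ofReal {N : ℕ} (g : Rn N → ℝ) (x : Rn N) :
    ‖fderiv ℝ (fun y => ((g y : ℝ) : ℂ)) x‖ = ‖fderiv ℝ g x‖ := by
  by_cases h : DifferentiableAt ℝ g x
  · have h1 : fderiv ℝ (fun y => ((g y : ℝ) : ℂ)) x = Complex.ofRealCLM.comp (fderiv ℝ g x) :=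
      (Complex.ofRealCLM.hasFDerivAt.comp x h.hasFDerivAt).fderiv
    rw [h1, norm_ofRealCLM_comp]
  · have h2 : ¬ DifferentiableAt ℝ (fun y => ((g y : ℝ) : ℂ)) x := by
      intro hc
      exact h (by simpa [Function.comp_def] using
        (Complex.reCLM.differentiableAt).comp x hc)
    rw [fderiv_zero_of_not_differentiableAt h, fderiv_zero_of_not_differentiableAt h2,
      norm_zero, norm_zero]

lemma norm_fderiv_smul_scale {N : ℕ} (g : Rn N → ℝ) {t c : ℝ} (ht : t ≠ 0) (hc : c ≠ 0)
    (x : Rn N) :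
    ‖fderiv ℝ (fun y => c * g (t • y)) x‖ = |c| * |t| * ‖fderiv ℝ g (t • x)‖ := by
  by_cases h : DifferentiableAt ℝ g (t • x)
  · have hlin : HasFDerivAt (fun y : Rn N => t • y) (t • ContinuousLinearMap.id ℝ (Rn N)) x := by
      exact (t • ContinuousLinearMap.id ℝ (Rn N)).hasFDerivAt (x := x)
    have hcomp : HasFDerivAt (fun y : Rn N => g (t • y))
        ((fderiv ℝ g (t • x)).comp (t • ContinuousLinearMap.id ℝ (Rn N))) x :=
      h.hasFDerivAt.comp x hlin
    have hf := (hcomp.const_mul c).fderiv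
    rw [hf]
    have hsm : (c • ((fderiv ℝ g (t • x)).comp (t • ContinuousLinearMap.id ℝ (Rn N))))
        = (c * t) • fderiv ℝ g (t • x) := by
      ext v
      simp only [ContinuousLinearMap.smul_apply, ContinuousLinearMap.coe_comp',
        Function.comp_apply, ContinuousLinearMap.coe_id', id_eq, _root_.map_smul, smul_eq_mul]
      ring
    rw [hsm, norm_smul, Real.norm_eq_abs, abs_mul]
  · have h2 : ¬ DifferentiableAt ℝ (fun y : Rn N => c * g (t • y)) x := by
      intro hc2
      apply h
      have hl : DifferentiableAt ℝ (fun z : Rn N => t⁻¹ • z) (t • x) := by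
        have := (t⁻¹ • ContinuousLinearMap.id ℝ (Rn N)).differentiableAt (x := t • x)
        exact this
      have hmem : t⁻¹ • (t • x) = x := by rw [smul_smul, inv_mul_cancel₀ ht, one_smul]
      have hc2' : DifferentiableAt ℝ (fun y : Rn N => c * g (t • y)) (t⁻¹ • (t • x)) := by
        rwa [hmem]
      have h3 : DifferentiableAt ℝ (fun z : Rn N => c⁻¹ * (c * g (t • (t⁻¹ • z)))) (t • x) :=
        ((hc2'.comp (t • x) hl)).const_mul c⁻¹
      have heq : (fun z : Rn N => c⁻¹ * (c * g (t • (t⁻¹ • z)))) = g := by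
        funext z
        rw [smul_smul, mul_inv_cancel₀ ht, one_smul, ← mul_assoc, inv_mul_cancel₀ hc, one_mul]
      rwa [heq] at h3
    rw [fderiv_zero_of_not_differentiableAt h2, fderiv_zero_of_not_differentiableAt h]
    simp

lemma norm_fderiv_ut {N : ℕ} (g : Rn N → ℝ) {t c : ℝ} (ht : t ≠ 0) (hc : c ≠ 0) (x : Rn N) :
    ‖fderiv ℝ (fun y => ((c * g (t • y) : ℝ) : ℂ)) x‖ = |c| * |t| * ‖fderiv ℝ g (t • x)‖ := by
  rw [norm_fderiv_ofReal (fun y => c * g (t • y)) x, norm_fderiv_smul_scale g ht hc x]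


lemma integral_comp_smul_Rn {N : ℕ} (f : Rn N → ℝ) {t : ℝ} (ht : 0 < t) :
    ∫ x : Rn N, f (t • x) = t ^ (-(N : ℝ)) * ∫ x : Rn N, f x := by
  rw [MeasureTheory.Measure.integral_comp_smul volume f t, finrank_euclideanSpace_fin,
    smul_eq_mul]
  congr 1
  rw [abs_of_nonneg (by positivity), ← Real.rpow_natCast t N, ← Real.rpow_neg ht.le]

lemma qmp_smul_Rn {N : ℕ} {t : ℝ} (ht : t ≠ 0) :
    Measure.QuasiMeasurePreserving (fun x : Rn N => t • x) volume volume := by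
  refine ⟨measurable_id.const_smul t, ?_⟩
  rw [MeasureTheory.Measure.map_addHaar_smul volume ht]
  exact MeasureTheory.Measure.smul_absolutelyContinuous

lemma nontrivial_Rn {N : ℕ} (hN : 1 ≤ N) : Nontrivial (Rn N) := by
  refine ⟨⟨EuclideanSpace.single (⟨0, hN⟩ : Fin N) (1 : ℝ), 0, fun h => ?_⟩⟩
  have h2 := congrFun (congrArg (fun (v : Rn N) => (v : Fin N → ℝ)) h) ⟨0, hN⟩
  simp at h2

lemma volume_univ_Rn {N : ℕ} (hN : 1 ≤ N) : volume (Set.univ : Set (Rn N)) = ⊤ := by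
  haveI : Nontrivial (Rn N) := nontrivial_Rn hN
  exact measure_univ_of_isAddLeftInvariant volume


/-- `m(a1*, a2*) = -∞`. With `Q_i = μ_i^{-N/4} Q` and the conformal rescaling
`u_{i,t}(x) = t^{N/2} Q_i (t x)`, the pair `(u_{1,t}, u_{2,t})` lies in `S(a1*,a2*)`,
`J(u_{1,t},u_{2,t}) = -β μ1^{-Nr1/4} μ2^{-Nr2/4} t^{(N/2)(r1+r2-2)} ∫ Q^{r1+r2}`,
and it tends to `-∞` as `t → ∞`. -/
theorem m_eq_bot_double_critical (N : ℕ) (μ1 μ2 β r1 r2 : ℝ) (hN : 1 ≤ N)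
    (hμ1 : 0 < μ1) (hμ2 : 0 < μ2) (hβ : 0 < β) (hr1 : 1 < r1) (hr2 : 1 < r2)
    (hr : r1 + r2 < 2 + 4 / (N : ℝ))
    (Q : Rn N → ℝ) (hQ : IsGNGroundState N Q)
    (hQnorm : (1 / 2) * (∫ x, ‖fderiv ℝ Q x‖ ^ 2)
      = ((N : ℝ) / (2 * (N : ℝ) + 4)) * ∫ x, Q x ^ ((2 : ℝ) + 4 / (N : ℝ))) :
    (∀ t : ℝ, 0 < t →
      (fun x : Rn N => ((t ^ ((N : ℝ) / 2) * (μ1 ^ (-(N : ℝ) / 4) * Q (t • x)) : ℝ) : ℂ),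
        fun x : Rn N => ((t ^ ((N : ℝ) / 2) * (μ2 ^ (-(N : ℝ) / 4) * Q (t • x)) : ℝ) : ℂ))
        ∈ Sconstr N (aStar N μ1 Q) (aStar N μ2 Q) ∧
      Jfun N μ1 μ2 β r1 r2
        (fun x : Rn N => ((t ^ ((N : ℝ) / 2) * (μ1 ^ (-(N : ℝ) / 4) * Q (t • x)) : ℝ) : ℂ),
          fun x : Rn N => ((t ^ ((N : ℝ) / 2) * (μ2 ^ (-(N : ℝ) / 4) * Q (t • x)) : ℝ) : ℂ))
        = -β * μ1 ^ (-(N : ℝ) * r1 / 4) * μ2 ^ (-(N : ℝ) * r2 / 4)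
            * t ^ (((N : ℝ) / 2) * (r1 + r2 - 2)) * ∫ x, Q x ^ (r1 + r2)) ∧
    (∀ M : ℝ, ∃ u ∈ Sconstr N (aStar N μ1 Q) (aStar N μ2 Q),
      Jfun N μ1 μ2 β r1 r2 u < M) := by
  have hN0 : (0:ℝ) < (N:ℝ) := by exact_mod_cast hN
  obtain ⟨hQpos, hQrad, hQ2, hQd2, hPDE⟩ := hQ
  set GQ : ℝ := ∫ x : Rn N, ‖fderiv ℝ Q x‖ ^ 2 with hGQ
  set P : ℝ := ∫ x : Rn N, Q x ^ ((2:ℝ) + 4 / (N:ℝ)) with hPdef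
  set C : ℝ := ∫ x : Rn N, Q x ^ (r1 + r2) with hCdef
  have hvol : volume (Set.univ : Set (Rn N)) = ⊤ := volume_univ_Rn hN
  have hQae : AEStronglyMeasurable Q (volume : Measure (Rn N)) := hQ2.aestronglyMeasurable
  have hI2 : Integrable (fun x : Rn N => Q x ^ 2) volume :=
    (memLp_two_iff_integrable_sq hQae).1 hQ2
  have hdae : AEStronglyMeasurable (fun x : Rn N => fderiv ℝ Q x) volume :=
    hQd2.aestronglyMeasurable
  have hId2 : Integrable (fun x : Rn N => ‖fderiv ℝ Q x‖ ^ 2) volume :=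
    (memLp_two_iff_integrable_sq_norm hdae).1 hQd2
  -- positivity of the kinetic energy of Q
  have hGQpos : 0 < GQ := by
    rcases eq_or_lt_of_le (integral_nonneg (fun x : Rn N => by positivity) :
        (0:ℝ) ≤ GQ) with h0 | h
    · exfalso
      have hae0 : (fun x : Rn N => ‖fderiv ℝ Q x‖ ^ 2) =ᵐ[volume] 0 :=
        (integral_eq_zero_iff_of_nonneg (fun x => by positivity) hId2).1 h0.symm
      have hae1 : ∀ᵐ y ∂(volume : Measure (Rn N)), fderiv ℝ Q y = 0 := by
        filter_upwards [hae0] with y hy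
        have hy' : ‖fderiv ℝ Q y‖ ^ 2 = 0 := hy
        exact norm_eq_zero.1 (pow_eq_zero_iff two_ne_zero |>.1 hy')
      have hlap : ∀ x : Rn N, lapR Q x = 0 := by
        intro x
        refine Finset.sum_eq_zero fun i _ => ?_
        have hgi : ∀ᵐ y ∂(volume : Measure (Rn N)),
            (fun y : Rn N => fderiv ℝ Q y (EuclideanSpace.single i 1)) y = 0 := by
          filter_upwards [hae1] with y hy
          simp [hy]
        rw [fderiv_eq_zero_of_ae_zero hgi x]
        simp
      have hconst : ∀ x : Rn N, Q x = (2 / (N:ℝ)) ^ ((N:ℝ)/4) := by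
        intro x
        have hp := hPDE x
        rw [hlap x] at hp
        have hq : 0 < Q x := hQpos x
        have h4 : Q x ^ ((1:ℝ) + 4/(N:ℝ)) = Q x * Q x ^ ((4:ℝ)/(N:ℝ)) := by
          rw [Real.rpow_add hq, Real.rpow_one]
        rw [h4] at hp
        have h5 : Q x ^ ((4:ℝ)/(N:ℝ)) = 2 / (N:ℝ) := by
          have h5' : Q x * (2/(N:ℝ)) = Q x * Q x ^ ((4:ℝ)/(N:ℝ)) := by
            rw [← hp]; ring
          exact (mul_left_cancel₀ hq.ne' h5').symm
        have h6 : (Q x ^ ((4:ℝ)/(N:ℝ))) ^ ((N:ℝ)/4) = Q x := by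
          rw [← Real.rpow_mul hq.le,
            show ((4:ℝ)/(N:ℝ)) * ((N:ℝ)/4) = 1 by field_simp, Real.rpow_one]
        rw [← h6, h5]
      set c0 : ℝ := (2 / (N:ℝ)) ^ ((N:ℝ)/4) with hc0def
      have hc0 : 0 < c0 := Real.rpow_pos_of_pos (by positivity) _
      have hic : Integrable (fun _ : Rn N => c0 ^ 2) volume := by
        have heq : (fun x : Rn N => Q x ^ 2) = fun _ : Rn N => c0 ^ 2 :=
          funext fun x => by rw [hconst x]
        rwa [heq] at hI2
      rcases integrable_const_iff.1 hic with h | h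
      · exact (by positivity : (0:ℝ) < c0 ^ 2).ne' h
      · exact (@measure_lt_top _ _ volume h Set.univ).ne hvol
    · exact h
  -- positivity and integrability of the nonlinear terms of Q
  have hPpos : 0 < P := by
    by_contra h
    push_neg at h
    have h1 : (N:ℝ) / (2*(N:ℝ)+4) * P ≤ 0 :=
      mul_nonpos_of_nonneg_of_nonpos (by positivity) h
    rw [← hQnorm] at h1
    nlinarith
  have hIp : Integrable (fun x : Rn N => Q x ^ ((2:ℝ) + 4/(N:ℝ))) volume := by
    by_contra h
    exact hPpos.ne' (hPdef.trans (integral_undef h))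
  have hsum2 : 2 < r1 + r2 := by linarith
  have hIC : Integrable (fun x : Rn N => Q x ^ (r1 + r2)) volume := by
    refine Integrable.mono' (hI2.add hIp) ?_ ?_
    · exact (Real.continuous_rpow_const (by linarith : (0:ℝ) ≤ r1 + r2)).comp_aestronglyMeasurable hQae
    · filter_upwards with x
      simp only [Pi.add_apply]
      have hq := hQpos x
      rw [Real.norm_of_nonneg (Real.rpow_nonneg hq.le _)]
      have h3 : (0:ℝ) ≤ Q x ^ ((2:ℝ)+4/(N:ℝ)) := Real.rpow_nonneg hq.le _
      have h3' : (0:ℝ) ≤ Q x ^ (2:ℕ) := by positivity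
      have h2 : Q x ^ ((2:ℝ)) = Q x ^ (2:ℕ) := by
        rw [← Real.rpow_natCast (Q x) 2]; norm_num
      rcases le_total (Q x) 1 with h1 | h1
      · have hle : Q x ^ (r1+r2) ≤ Q x ^ ((2:ℝ)) :=
          Real.rpow_le_rpow_of_exponent_ge hq h1 (by linarith)
        rw [h2] at hle
        linarith
      · have hle : Q x ^ (r1+r2) ≤ Q x ^ ((2:ℝ)+4/(N:ℝ)) :=
          Real.rpow_le_rpow_of_exponent_le h1 hr.le
        linarith
  have hCpos : 0 < C := by
    rw [hCdef, integral_pos_iff_support_of_nonneg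
      (fun x => Real.rpow_nonneg (hQpos x).le _) hIC]
    have hs : Function.support (fun x : Rn N => Q x ^ (r1+r2)) = Set.univ := by
      ext x
      simp [Function.support, (Real.rpow_pos_of_pos (hQpos x) _).ne']
    rw [hs, hvol]
    exact ENNReal.zero_lt_top
  -- the key computation for each t
  have key : ∀ t : ℝ, 0 < t →
      (fun x : Rn N => ((t ^ ((N : ℝ) / 2) * (μ1 ^ (-(N : ℝ) / 4) * Q (t • x)) : ℝ) : ℂ),
        fun x : Rn N => ((t ^ ((N : ℝ) / 2) * (μ2 ^ (-(N : ℝ) / 4) * Q (t • x)) : ℝ) : ℂ))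
        ∈ Sconstr N (aStar N μ1 Q) (aStar N μ2 Q) ∧
      Jfun N μ1 μ2 β r1 r2
        (fun x : Rn N => ((t ^ ((N : ℝ) / 2) * (μ1 ^ (-(N : ℝ) / 4) * Q (t • x)) : ℝ) : ℂ),
          fun x : Rn N => ((t ^ ((N : ℝ) / 2) * (μ2 ^ (-(N : ℝ) / 4) * Q (t • x)) : ℝ) : ℂ))
        = -β * μ1 ^ (-(N : ℝ) * r1 / 4) * μ2 ^ (-(N : ℝ) * r2 / 4)
            * t ^ (((N : ℝ) / 2) * (r1 + r2 - 2)) * C := by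
    intro t ht
    have hfun1 : (fun x : Rn N => ((t ^ ((N:ℝ)/2) * (μ1 ^ (-(N:ℝ)/4) * Q (t • x)) : ℝ) : ℂ))
        = fun x : Rn N => (((t ^ ((N:ℝ)/2) * μ1 ^ (-(N:ℝ)/4)) * Q (t • x) : ℝ) : ℂ) := by
      funext x; exact congrArg _ (mul_assoc _ _ _).symm
    have hfun2 : (fun x : Rn N => ((t ^ ((N:ℝ)/2) * (μ2 ^ (-(N:ℝ)/4) * Q (t • x)) : ℝ) : ℂ))
        = fun x : Rn N => (((t ^ ((N:ℝ)/2) * μ2 ^ (-(N:ℝ)/4)) * Q (t • x) : ℝ) : ℂ) := by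
      funext x; exact congrArg _ (mul_assoc _ _ _).symm
    rw [hfun1, hfun2]
    set c1 : ℝ := t ^ ((N:ℝ)/2) * μ1 ^ (-(N:ℝ)/4) with hc1def
    set c2 : ℝ := t ^ ((N:ℝ)/2) * μ2 ^ (-(N:ℝ)/4) with hc2def
    have hc1 : 0 < c1 := by
      rw [hc1def]; positivity
    have hc2 : 0 < c2 := by
      rw [hc2def]; positivity
    -- pointwise identities
    have hnorm : ∀ (c : ℝ) (x : Rn N), 0 < c →
        ‖((c * Q (t • x) : ℝ) : ℂ)‖ = c * Q (t • x) := by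
      intro c x hc
      rw [Complex.norm_real, Real.norm_eq_abs, abs_of_pos (mul_pos hc (hQpos _))]
    -- integrable kinetic terms
    have hkinptw : ∀ (c : ℝ), 0 < c → ∀ x : Rn N,
        ‖fderiv ℝ (fun y : Rn N => ((c * Q (t • y) : ℝ) : ℂ)) x‖ ^ 2
          = c^2 * t^2 * ‖fderiv ℝ Q (t • x)‖ ^ 2 := by
      intro c hc x
      rw [norm_fderiv_ut Q ht.ne' hc.ne' x, abs_of_pos hc, abs_of_pos ht]
      ring
    have hIkin : ∀ (c : ℝ), 0 < c → Integrable
        (fun x : Rn N => ‖fderiv ℝ (fun y : Rn N => ((c * Q (t • y) : ℝ) : ℂ)) x‖ ^ 2)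
        volume := by
      intro c hc
      refine ((hId2.comp_smul ht.ne').const_mul (c^2*t^2)).congr ?_
      filter_upwards with x
      exact (hkinptw c hc x).symm
    -- value of kinetic integrals
    have hkinInt : ∀ (c : ℝ), 0 < c →
        (∫ x : Rn N, ‖fderiv ℝ (fun y : Rn N => ((c * Q (t • y) : ℝ) : ℂ)) x‖ ^ 2)
          = c^2 * t^2 * (t ^ (-(N:ℝ)) * GQ) := by
      intro c hc
      calc (∫ x : Rn N, ‖fderiv ℝ (fun y : Rn N => ((c * Q (t • y) : ℝ) : ℂ)) x‖ ^ 2)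
          = ∫ x : Rn N, c^2 * t^2 * ‖fderiv ℝ Q (t • x)‖ ^ 2 := by
            exact integral_congr_ae (Eventually.of_forall (fun x => hkinptw c hc x))
        _ = c^2 * t^2 * ∫ x : Rn N, ‖fderiv ℝ Q (t • x)‖ ^ 2 := integral_const_mul _ _
        _ = c^2 * t^2 * (t ^ (-(N:ℝ)) * GQ) := by
            rw [integral_comp_smul_Rn (fun y : Rn N => ‖fderiv ℝ Q y‖ ^ 2) ht]
    -- mass integrals
    have hmassInt : ∀ (c : ℝ), 0 < c →
        (∫ x : Rn N, ‖((c * Q (t • x) : ℝ) : ℂ)‖ ^ 2)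
          = c^2 * (t ^ (-(N:ℝ)) * ∫ x : Rn N, Q x ^ 2) := by
      intro c hc
      calc (∫ x : Rn N, ‖((c * Q (t • x) : ℝ) : ℂ)‖ ^ 2)
          = ∫ x : Rn N, c^2 * Q (t • x) ^ 2 := by
            refine integral_congr_ae (Eventually.of_forall (fun x => ?_))
            dsimp only
            rw [hnorm c x hc, mul_pow]
        _ = c^2 * ∫ x : Rn N, Q (t • x) ^ 2 := integral_const_mul _ _
        _ = c^2 * (t ^ (-(N:ℝ)) * ∫ x : Rn N, Q x ^ 2) := by
            rw [integral_comp_smul_Rn (fun y : Rn N => Q y ^ 2) ht]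
    -- p-norm integrals
    have hpInt : ∀ (c : ℝ), 0 < c →
        (∫ x : Rn N, ‖((c * Q (t • x) : ℝ) : ℂ)‖ ^ ((2:ℝ) + 4/(N:ℝ)))
          = c ^ ((2:ℝ) + 4/(N:ℝ)) * (t ^ (-(N:ℝ)) * P) := by
      intro c hc
      calc (∫ x : Rn N, ‖((c * Q (t • x) : ℝ) : ℂ)‖ ^ ((2:ℝ) + 4/(N:ℝ)))
          = ∫ x : Rn N, c ^ ((2:ℝ) + 4/(N:ℝ)) * Q (t • x) ^ ((2:ℝ) + 4/(N:ℝ)) := by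
            refine integral_congr_ae (Eventually.of_forall (fun x => ?_))
            dsimp only
            rw [hnorm c x hc, Real.mul_rpow hc.le (hQpos _).le]
        _ = c ^ ((2:ℝ) + 4/(N:ℝ)) * ∫ x : Rn N, Q (t • x) ^ ((2:ℝ) + 4/(N:ℝ)) :=
            integral_const_mul _ _
        _ = c ^ ((2:ℝ) + 4/(N:ℝ)) * (t ^ (-(N:ℝ)) * P) := by
            rw [integral_comp_smul_Rn (fun y : Rn N => Q y ^ ((2:ℝ) + 4/(N:ℝ))) ht]
    -- cross term integral
    have hcrossInt :
        (∫ x : Rn N, ‖((c1 * Q (t • x) : ℝ) : ℂ)‖ ^ r1 * ‖((c2 * Q (t • x) : ℝ) : ℂ)‖ ^ r2)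
          = c1 ^ r1 * c2 ^ r2 * (t ^ (-(N:ℝ)) * C) := by
      calc (∫ x : Rn N, ‖((c1 * Q (t • x) : ℝ) : ℂ)‖ ^ r1 * ‖((c2 * Q (t • x) : ℝ) : ℂ)‖ ^ r2)
          = ∫ x : Rn N, c1 ^ r1 * c2 ^ r2 * Q (t • x) ^ (r1 + r2) := by
            refine integral_congr_ae (Eventually.of_forall (fun x => ?_))
            dsimp only
            rw [hnorm c1 x hc1, hnorm c2 x hc2, Real.mul_rpow hc1.le (hQpos _).le,
              Real.mul_rpow hc2.le (hQpos _).le, Real.rpow_add (hQpos _)]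
            ring
        _ = c1 ^ r1 * c2 ^ r2 * ∫ x : Rn N, Q (t • x) ^ (r1 + r2) := integral_const_mul _ _
        _ = c1 ^ r1 * c2 ^ r2 * (t ^ (-(N:ℝ)) * C) := by
            rw [integral_comp_smul_Rn (fun y : Rn N => Q y ^ (r1 + r2)) ht]
    -- membership in H1
    have hmemH1 : ∀ (c : ℝ), 0 < c →
        (fun x : Rn N => ((c * Q (t • x) : ℝ) : ℂ)) ∈ H1 N := by
      intro c hc
      have haesm : AEStronglyMeasurable (fun x : Rn N => ((c * Q (t • x) : ℝ) : ℂ)) volume := by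
        have h1 : AEStronglyMeasurable (fun x : Rn N => Q (t • x)) volume :=
          hQae.comp_quasiMeasurePreserving (qmp_smul_Rn ht.ne')
        exact Complex.continuous_ofReal.comp_aestronglyMeasurable (h1.const_mul c)
      constructor
      · rw [memLp_two_iff_integrable_sq_norm haesm]
        refine ((hI2.comp_smul ht.ne').const_mul (c^2)).congr ?_
        filter_upwards with x
        rw [hnorm c x hc, mul_pow]
      · have haesm2 : AEStronglyMeasurable
            (fun x : Rn N => fderiv ℝ (fun y : Rn N => ((c * Q (t • y) : ℝ) : ℂ)) x) volume :=
          (measurable_fderiv ℝ _).aestronglyMeasurable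
        rw [memLp_two_iff_integrable_sq_norm haesm2]
        exact hIkin c hc
    -- rpow algebra
    have hrp2 : ∀ c : ℝ, 0 ≤ c → c ^ (2:ℕ) = c ^ ((2:ℝ)) := by
      intro c hc
      rw [← Real.rpow_natCast c 2]; norm_num
    have hcs : ∀ (μ s : ℝ), 0 < μ →
        (t ^ ((N:ℝ)/2) * μ ^ (-(N:ℝ)/4)) ^ s = t ^ ((N:ℝ)*s/2) * μ ^ (-(N:ℝ)*s/4) := by
      intro μ s hμ
      rw [Real.mul_rpow (Real.rpow_nonneg ht.le _) (Real.rpow_nonneg hμ.le _),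
        ← Real.rpow_mul ht.le, ← Real.rpow_mul hμ.le,
        show (N:ℝ)/2*s = (N:ℝ)*s/2 from by ring,
        show -(N:ℝ)/4*s = -(N:ℝ)*s/4 from by ring]
    -- coefficient identities
    have halgmass : ∀ μ : ℝ, 0 < μ →
        (t ^ ((N:ℝ)/2) * μ ^ (-(N:ℝ)/4))^2 * t ^ (-(N:ℝ)) = μ ^ (-(N:ℝ)/2) := by
      intro μ hμ
      rw [hrp2 _ (by positivity), hcs μ 2 hμ, mul_right_comm, ← Real.rpow_add ht,
        show (N:ℝ)*2/2 + -(N:ℝ) = 0 from by ring, Real.rpow_zero, one_mul,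
        show -(N:ℝ)*2/4 = -(N:ℝ)/2 from by ring]
    have halgkin : ∀ μ : ℝ, 0 < μ →
        (t ^ ((N:ℝ)/2) * μ ^ (-(N:ℝ)/4))^2 * t^2 * t ^ (-(N:ℝ))
          = t ^ ((2:ℝ)) * μ ^ (-(N:ℝ)/2) := by
      intro μ hμ
      rw [hrp2 _ (by positivity), hrp2 t ht.le, hcs μ 2 hμ]
      rw [show t ^ ((N:ℝ)*2/2) * μ ^ (-(N:ℝ)*2/4) * t ^ ((2:ℝ)) * t ^ (-(N:ℝ))
          = (t ^ ((N:ℝ)*2/2) * t ^ ((2:ℝ)) * t ^ (-(N:ℝ))) * μ ^ (-(N:ℝ)*2/4) from by ring,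
        ← Real.rpow_add ht, ← Real.rpow_add ht,
        show (N:ℝ)*2/2 + 2 + -(N:ℝ) = 2 from by ring,
        show -(N:ℝ)*2/4 = -(N:ℝ)/2 from by ring]
    have halgp : ∀ μ : ℝ, 0 < μ →
        μ * ((t ^ ((N:ℝ)/2) * μ ^ (-(N:ℝ)/4)) ^ ((2:ℝ) + 4/(N:ℝ)) * t ^ (-(N:ℝ)))
          = t ^ ((2:ℝ)) * μ ^ (-(N:ℝ)/2) := by
      intro μ hμ
      rw [hcs μ _ hμ,
        show (N:ℝ)*((2:ℝ) + 4/(N:ℝ))/2 = (N:ℝ) + 2 from by field_simp; ring,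
        show -(N:ℝ)*((2:ℝ) + 4/(N:ℝ))/4 = -(N:ℝ)/2 - 1 from by field_simp; ring]
      rw [show μ * (t ^ ((N:ℝ)+2) * μ ^ (-(N:ℝ)/2 - 1) * t ^ (-(N:ℝ)))
          = (t ^ ((N:ℝ)+2) * t ^ (-(N:ℝ))) * (μ ^ ((1:ℝ)) * μ ^ (-(N:ℝ)/2 - 1)) from by
            rw [Real.rpow_one]; ring,
        ← Real.rpow_add ht, ← Real.rpow_add hμ,
        show (N:ℝ)+2 + -(N:ℝ) = 2 from by ring,
        show (1:ℝ) + (-(N:ℝ)/2 - 1) = -(N:ℝ)/2 from by ring]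
    have halgcross :
        c1 ^ r1 * c2 ^ r2 * t ^ (-(N:ℝ))
          = μ1 ^ (-(N:ℝ)*r1/4) * μ2 ^ (-(N:ℝ)*r2/4) * t ^ (((N:ℝ)/2) * (r1 + r2 - 2)) := by
      rw [hc1def, hc2def, hcs μ1 r1 hμ1, hcs μ2 r2 hμ2]
      rw [show t ^ ((N:ℝ)*r1/2) * μ1 ^ (-(N:ℝ)*r1/4) * (t ^ ((N:ℝ)*r2/2) * μ2 ^ (-(N:ℝ)*r2/4))
            * t ^ (-(N:ℝ))
          = μ1 ^ (-(N:ℝ)*r1/4) * μ2 ^ (-(N:ℝ)*r2/4)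
            * (t ^ ((N:ℝ)*r1/2) * t ^ ((N:ℝ)*r2/2) * t ^ (-(N:ℝ))) from by ring,
        ← Real.rpow_add ht, ← Real.rpow_add ht,
        show (N:ℝ)*r1/2 + (N:ℝ)*r2/2 + -(N:ℝ) = ((N:ℝ)/2) * (r1 + r2 - 2) from by ring]
    constructor
    · -- membership in the constraint set
      refine ⟨hmemH1 c1 hc1, hmemH1 c2 hc2, ?_, ?_⟩
      · rw [hmassInt c1 hc1, ← mul_assoc, hc1def, halgmass μ1 hμ1]
        rw [aStar, neg_div]
      · rw [hmassInt c2 hc2, ← mul_assoc, hc2def, halgmass μ2 hμ2]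
        rw [aStar, neg_div]
    · -- the energy identity
      have hsplit : (∫ x : Rn N,
            (‖fderiv ℝ (fun y : Rn N => ((c1 * Q (t • y) : ℝ) : ℂ)) x‖ ^ 2
              + ‖fderiv ℝ (fun y : Rn N => ((c2 * Q (t • y) : ℝ) : ℂ)) x‖ ^ 2))
          = (∫ x : Rn N, ‖fderiv ℝ (fun y : Rn N => ((c1 * Q (t • y) : ℝ) : ℂ)) x‖ ^ 2)
            + ∫ x : Rn N, ‖fderiv ℝ (fun y : Rn N => ((c2 * Q (t • y) : ℝ) : ℂ)) x‖ ^ 2 :=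
        integral_add (hIkin c1 hc1) (hIkin c2 hc2)
      rw [Jfun]
      simp only
      rw [hsplit, hkinInt c1 hc1, hkinInt c2 hc2, hpInt c1 hc1, hpInt c2 hc2, hcrossInt]
      have hK1 : c1^2 * t^2 * (t ^ (-(N:ℝ)) * GQ) = t ^ ((2:ℝ)) * μ1 ^ (-(N:ℝ)/2) * GQ := by
        rw [hc1def, show (t ^ ((N:ℝ)/2) * μ1 ^ (-(N:ℝ)/4))^2 * t^2 * (t ^ (-(N:ℝ)) * GQ)
          = ((t ^ ((N:ℝ)/2) * μ1 ^ (-(N:ℝ)/4))^2 * t^2 * t ^ (-(N:ℝ))) * GQ from by ring,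
          halgkin μ1 hμ1]
      have hK2 : c2^2 * t^2 * (t ^ (-(N:ℝ)) * GQ) = t ^ ((2:ℝ)) * μ2 ^ (-(N:ℝ)/2) * GQ := by
        rw [hc2def, show (t ^ ((N:ℝ)/2) * μ2 ^ (-(N:ℝ)/4))^2 * t^2 * (t ^ (-(N:ℝ)) * GQ)
          = ((t ^ ((N:ℝ)/2) * μ2 ^ (-(N:ℝ)/4))^2 * t^2 * t ^ (-(N:ℝ))) * GQ from by ring,
          halgkin μ2 hμ2]
      have hA1 : μ1 * (N:ℝ) / (2 * (N:ℝ) + 4) * (c1 ^ ((2:ℝ) + 4/(N:ℝ)) * (t ^ (-(N:ℝ)) * P))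
          = 1/2 * (t ^ ((2:ℝ)) * μ1 ^ (-(N:ℝ)/2) * GQ) := by
        rw [hc1def]
        have h1 : μ1 * (N:ℝ) / (2 * (N:ℝ) + 4)
              * ((t ^ ((N:ℝ)/2) * μ1 ^ (-(N:ℝ)/4)) ^ ((2:ℝ) + 4/(N:ℝ)) * (t ^ (-(N:ℝ)) * P))
            = (μ1 * ((t ^ ((N:ℝ)/2) * μ1 ^ (-(N:ℝ)/4)) ^ ((2:ℝ) + 4/(N:ℝ)) * t ^ (-(N:ℝ))))
              * ((N:ℝ) / (2 * (N:ℝ) + 4) * P) := by ring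
        rw [h1, halgp μ1 hμ1, ← hQnorm]
        ring
      have hA2 : μ2 * (N:ℝ) / (2 * (N:ℝ) + 4) * (c2 ^ ((2:ℝ) + 4/(N:ℝ)) * (t ^ (-(N:ℝ)) * P))
          = 1/2 * (t ^ ((2:ℝ)) * μ2 ^ (-(N:ℝ)/2) * GQ) := by
        rw [hc2def]
        have h1 : μ2 * (N:ℝ) / (2 * (N:ℝ) + 4)
              * ((t ^ ((N:ℝ)/2) * μ2 ^ (-(N:ℝ)/4)) ^ ((2:ℝ) + 4/(N:ℝ)) * (t ^ (-(N:ℝ)) * P))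
            = (μ2 * ((t ^ ((N:ℝ)/2) * μ2 ^ (-(N:ℝ)/4)) ^ ((2:ℝ) + 4/(N:ℝ)) * t ^ (-(N:ℝ))))
              * ((N:ℝ) / (2 * (N:ℝ) + 4) * P) := by ring
        rw [h1, halgp μ2 hμ2, ← hQnorm]
        ring
      have hX : c1 ^ r1 * c2 ^ r2 * (t ^ (-(N:ℝ)) * C)
          = μ1 ^ (-(N:ℝ)*r1/4) * μ2 ^ (-(N:ℝ)*r2/4) * t ^ (((N:ℝ)/2) * (r1 + r2 - 2)) * C := by
        rw [← mul_assoc, halgcross]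
      rw [hK1, hK2, hA1, hA2, hX]
      ring
  refine ⟨key, ?_⟩
  -- unboundedness from below
  intro M
  have hepos : 0 < ((N:ℝ)/2) * (r1 + r2 - 2) := by
    apply mul_pos (by positivity)
    linarith
  set e : ℝ := ((N:ℝ)/2) * (r1 + r2 - 2) with he
  set K : ℝ := β * μ1 ^ (-(N:ℝ)*r1/4) * μ2 ^ (-(N:ℝ)*r2/4) * C with hK
  have hKpos : 0 < K := by
    rw [hK]
    have := Real.rpow_pos_of_pos hμ1 (-(N:ℝ)*r1/4)
    have := Real.rpow_pos_of_pos hμ2 (-(N:ℝ)*r2/4)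
    positivity
  set t : ℝ := max 1 (((1+|M|)/K) ^ e⁻¹) with htdef
  have ht : 0 < t := lt_of_lt_of_le one_pos (le_max_left _ _)
  obtain ⟨hmem, hJ⟩ := key t ht
  refine ⟨_, hmem, ?_⟩
  rw [hJ]
  have hte : (1+|M|)/K ≤ t ^ e := by
    have h1 : ((1+|M|)/K) ^ e⁻¹ ≤ t := le_max_right _ _
    have h0 : (0:ℝ) ≤ (1+|M|)/K := by positivity
    calc (1+|M|)/K = (((1+|M|)/K) ^ e⁻¹) ^ e := (Real.rpow_inv_rpow h0 hepos.ne').symm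
      _ ≤ t ^ e := Real.rpow_le_rpow (Real.rpow_nonneg h0 _) h1 hepos.le
  have h2 : 1 + |M| ≤ K * t ^ e := by
    rw [div_le_iff₀ hKpos] at hte
    linarith [hte]
  have h3 : -β * μ1 ^ (-(N:ℝ)*r1/4) * μ2 ^ (-(N:ℝ)*r2/4) * t ^ e * C = -(K * t ^ e) := by
    rw [hK]; ring
  rw [h3]
  have h4 : -|M| ≤ M := neg_abs_le M
  linarith
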